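/- Let p ≥ 3 and k ≥ 1 be integers and a, b ∈ ℝ with 0 < b ≤ p-2 and k/2 + a + 1 > 0. For w > 0 define r(w) = w · [∫_0^1 λ^{b/2} (1-λ)^{p/2 - b/2 - 1} (1 + wλ)^{-k/2 - a - b/2 - 2} dλ] / [∫_0^1 λ^{b/2 - 1} (1-λ)^{p/2 - b/2 - 1} (1 + wλ)^{-k/2 - a - b/2 - 2} dλ]. Then r is nondecreasing on (0,∞). (Lemma 6.3, part 1.) -/

import Mathlib

/-!
Substituting `t = wλ` turns `r(w)` into the mean of the density proportional to
`t^(b/2-1) (w-t)^(p/2-b/2-1) (1+t)^(-k/2-a-b/2-2)` on `(0, w)`. For `w₁ ≤ w₂` the density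
ratio `((w₂-t)/(w₁-t))^(p/2-b/2-1)` is nondecreasing in `t` because `p/2-b/2-1 ≥ 0`, and a
monotone likelihood ratio orders the means: integrate `(u-t)(f(t)g(u) - f(u)g(t)) ≥ 0` in both
variables.
-/

open MeasureTheory Real Set

/-- The shrinkage factor `r(w)` of the generalized Bayes estimator `(1 - r(W)/W)X`,
`W = ‖X‖²/‖U‖²`, corresponding to the prior with density proportional to `η^a ‖θ‖^{-b}`:
`r(w) = w ⬝ [∫₀¹ λ^{b/2} (1-λ)^{p/2-b/2-1} (1+wλ)^{-k/2-a-b/2-2} dλ] /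
  [∫₀¹ λ^{b/2-1} (1-λ)^{p/2-b/2-1} (1+wλ)^{-k/2-a-b/2-2} dλ]`. -/
noncomputable def rshrink (p k : ℕ) (a b : ℝ) (w : ℝ) : ℝ :=
  w * (∫ l in Set.Ioo (0 : ℝ) 1,
        l ^ (b / 2) * (1 - l) ^ ((p : ℝ) / 2 - b / 2 - 1) *
          (1 + w * l) ^ (-(k : ℝ) / 2 - a - b / 2 - 2)) /
    ∫ l in Set.Ioo (0 : ℝ) 1,
      l ^ (b / 2 - 1) * (1 - l) ^ ((p : ℝ) / 2 - b / 2 - 1) *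
        (1 + w * l) ^ (-(k : ℝ) / 2 - a - b / 2 - 2)

theorem integral_id_mul_mul_integral_le_of_cross_le {μ : Measure ℝ} {f g : ℝ → ℝ}
    (hf : Integrable f μ) (hg : Integrable g μ) (hf₁ : Integrable (fun t => t * f t) μ)
    (hg₁ : Integrable (fun t => t * g t) μ) (hfg : ∀ t u, t ≤ u → f u * g t ≤ f t * g u) :
    (∫ t, t * f t ∂μ) * ∫ t, g t ∂μ ≤ (∫ t, t * g t ∂μ) * ∫ t, f t ∂μ := by
  set F₀ := ∫ t, f t ∂μ
  set F₁ := ∫ t, t * f t ∂μ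
  set G₀ := ∫ t, g t ∂μ
  set G₁ := ∫ t, t * g t ∂μ
  have kernel_nonneg : ∀ t u, 0 ≤ (u - t) * (f t * g u - f u * g t) := by
    intro t u
    rcases le_total t u with h | h
    · exact mul_nonneg (sub_nonneg.2 h) (sub_nonneg.2 (hfg t u h))
    · exact mul_nonneg_of_nonpos_of_nonpos (sub_nonpos.2 h) (sub_nonpos.2 (hfg u t h))
  have inner_nonneg : ∀ u, 0 ≤ g u * (u * F₀ - F₁) - f u * (u * G₀ - G₁) := by
    intro u
    have expand : g u * (u * F₀ - F₁) - f u * (u * G₀ - G₁) =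
        ∫ t, (u - t) * (f t * g u - f u * g t) ∂μ := by
      have h := fun t => show (u - t) * (f t * g u - f u * g t) =
          (u * g u) * f t - g u * (t * f t) - ((u * f u) * g t - f u * (t * g t)) by ring
      simp only [h]
      rw [integral_sub, integral_sub, integral_sub]
      · simp only [integral_const_mul, F₀, F₁, G₀, G₁]
        ring
      all_goals fun_prop
    exact expand ▸ integral_nonneg (kernel_nonneg · u)
  have outer :
      ∫ u, (g u * (u * F₀ - F₁) - f u * (u * G₀ - G₁)) ∂μ = 2 * (F₀ * G₁ - F₁ * G₀) := by
    have h := fun u => show g u * (u * F₀ - F₁) - f u * (u * G₀ - G₁) =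
        (u * g u) * F₀ - g u * F₁ - ((u * f u) * G₀ - f u * G₁) by ring
    simp only [h]
    rw [integral_sub, integral_sub, integral_sub]
    · simp only [integral_mul_const, F₀, F₁, G₀, G₁]
      ring
    all_goals fun_prop
  linarith [outer ▸ integral_nonneg inner_nonneg]

theorem integrableOn_Ioo_rpow_mul {e w : ℝ} {φ : ℝ → ℝ} (he : -1 < e)
    (hφ : ContinuousOn φ (Icc 0 w)) : IntegrableOn (fun t => t ^ e * φ t) (Ioo 0 w) :=
  ((intervalIntegral.intervalIntegrable_rpow' he).1.mul_continuousOn_of_subset hφ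
    measurableSet_Ioc isCompact_Icc Ioc_subset_Icc_self).mono_set Ioo_subset_Ioc_self

noncomputable def scaledBetaWeight (e c : ℝ) (h : ℝ → ℝ) (w : ℝ) : ℝ → ℝ :=
  (Ioo 0 w).indicator fun t => t ^ e * (w - t) ^ c * h t

section ScaledBetaWeight

variable {e c w : ℝ} {h : ℝ → ℝ}

theorem id_mul_scaledBetaWeight : (fun t => t * scaledBetaWeight e c h w t) =
    scaledBetaWeight e c (fun t => t * h t) w := by
  ext t
  by_cases ht : t ∈ Ioo 0 w <;>
    simp only [scaledBetaWeight, indicator_of_mem, indicator_of_notMem, ht, not_false_eq_true,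
      mul_zero]
  ring

theorem scaledBetaWeight_nonneg (hh : ∀ t ∈ Ioo 0 w, 0 ≤ h t) (t : ℝ) :
    0 ≤ scaledBetaWeight e c h w t :=
  indicator_nonneg (fun t ht => mul_nonneg (mul_nonneg (rpow_nonneg ht.1.le _)
    (rpow_nonneg (sub_pos.2 ht.2).le _)) (hh t ht)) t

theorem integrable_scaledBetaWeight (he : -1 < e) (hc : 0 ≤ c) (hh : ContinuousOn h (Icc 0 w)) :
    Integrable (scaledBetaWeight e c h w) := by
  rw [scaledBetaWeight, integrable_indicator_iff measurableSet_Ioo]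
  simp_rw [mul_assoc]
  exact integrableOn_Ioo_rpow_mul he
    (((continuousOn_const.sub continuousOn_id).rpow_const fun _ _ => Or.inr hc).mul hh)

theorem integral_scaledBetaWeight_pos (he : -1 < e) (hc : 0 ≤ c)
    (hh : ContinuousOn h (Icc 0 w)) (hpos : ∀ t ∈ Ioo 0 w, 0 < h t) (hw : 0 < w) :
    0 < ∫ t, scaledBetaWeight e c h w t := by
  rw [integral_pos_iff_support_of_nonneg (scaledBetaWeight_nonneg fun t ht => (hpos t ht).le)
    (integrable_scaledBetaWeight he hc hh)]
  refine (measure_mono fun t ht => ?_).trans_lt' (by simpa using hw : 0 < volume (Ioo 0 w))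
  rw [scaledBetaWeight, Function.mem_support, indicator_of_mem ht]
  exact (mul_pos (mul_pos (rpow_pos_of_pos ht.1 _) (rpow_pos_of_pos (sub_pos.2 ht.2) _))
    (hpos t ht)).ne'

theorem integral_scaledBetaWeight (hw : 0 < w) : ∫ t, scaledBetaWeight e c h w t =
    w ^ (e + c + 1) * ∫ l in Ioo 0 1, l ^ e * (1 - l) ^ c * h (w * l) := by
  set G : ℝ → ℝ := fun t => t ^ e * (w - t) ^ c * h t
  have scale : ∀ l ∈ uIcc (0 : ℝ) 1,
      G (w * l) = w ^ (e + c) * (l ^ e * (1 - l) ^ c * h (w * l)) := by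
    intro l hl
    rw [uIcc_of_le zero_le_one] at hl
    simp only [G, mul_rpow hw.le hl.1, show w - w * l = w * (1 - l) by ring,
      mul_rpow hw.le (sub_nonneg.2 hl.2), rpow_add hw]
    ring
  calc ∫ t, scaledBetaWeight e c h w t = ∫ t in (0)..w, G t := by
        rw [scaledBetaWeight, integral_indicator measurableSet_Ioo,
          intervalIntegral.integral_of_le hw.le, integral_Ioc_eq_integral_Ioo]
    _ = w * ∫ l in (0)..1, G (w * l) := by
        rw [intervalIntegral.integral_comp_mul_left G hw.ne', mul_zero, mul_one, smul_eq_mul,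
          mul_inv_cancel_left₀ hw.ne']
    _ = w * (w ^ (e + c) * ∫ l in (0)..1, l ^ e * (1 - l) ^ c * h (w * l)) := by
        rw [intervalIntegral.integral_congr scale, intervalIntegral.integral_const_mul]
    _ = _ := by
        rw [intervalIntegral.integral_of_le zero_le_one, integral_Ioc_eq_integral_Ioo,
          rpow_add_one hw.ne']
        ring

theorem scaledBetaWeight_cross_le {w₁ w₂ t u : ℝ} (hc : 0 ≤ c) (hh : ∀ t ∈ Ioo 0 w₂, 0 ≤ h t)
    (hw : w₁ ≤ w₂) (htu : t ≤ u) : scaledBetaWeight e c h w₁ u * scaledBetaWeight e c h w₂ t ≤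
      scaledBetaWeight e c h w₁ t * scaledBetaWeight e c h w₂ u := by
  have hh₁ : ∀ t ∈ Ioo 0 w₁, 0 ≤ h t := fun t ht => hh t ⟨ht.1, ht.2.trans_le hw⟩
  by_cases hu : u ∈ Ioo 0 w₁
  · by_cases ht : t ∈ Ioo 0 w₂
    · have ht₁ : t ∈ Ioo 0 w₁ := ⟨ht.1, htu.trans_lt hu.2⟩
      have hu₂ : u ∈ Ioo 0 w₂ := ⟨hu.1, hu.2.trans_le hw⟩
      simp only [scaledBetaWeight, indicator_of_mem hu, indicator_of_mem ht,
        indicator_of_mem ht₁, indicator_of_mem hu₂]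
      have key : (w₁ - u) ^ c * (w₂ - t) ^ c ≤ (w₁ - t) ^ c * (w₂ - u) ^ c := by
        rw [← mul_rpow (sub_pos.2 hu.2).le (sub_pos.2 ht.2).le,
          ← mul_rpow (sub_pos.2 ht₁.2).le (sub_pos.2 hu₂.2).le]
        exact rpow_le_rpow (mul_nonneg (sub_pos.2 hu.2).le (sub_pos.2 ht.2).le)
          (by nlinarith) hc
      have common : 0 ≤ t ^ e * u ^ e * (h t * h u) :=
        mul_nonneg (mul_nonneg (rpow_nonneg ht.1.le _) (rpow_nonneg hu.1.le _))
          (mul_nonneg (hh t ht) (hh u hu₂))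
      calc _ = t ^ e * u ^ e * (h t * h u) * ((w₁ - u) ^ c * (w₂ - t) ^ c) := by ring
        _ ≤ t ^ e * u ^ e * (h t * h u) * ((w₁ - t) ^ c * (w₂ - u) ^ c) :=
          mul_le_mul_of_nonneg_left key common
        _ = _ := by ring
    · rw [show scaledBetaWeight e c h w₂ t = 0 from indicator_of_notMem ht _, mul_zero]
      exact mul_nonneg (scaledBetaWeight_nonneg hh₁ t) (scaledBetaWeight_nonneg hh u)
  · rw [show scaledBetaWeight e c h w₁ u = 0 from indicator_of_notMem hu _, zero_mul]
    exact mul_nonneg (scaledBetaWeight_nonneg hh₁ t) (scaledBetaWeight_nonneg hh u)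

end ScaledBetaWeight

theorem rshrink_eq_div {p k : ℕ} {a b w : ℝ} (hw : 0 < w) :
    rshrink p k a b w =
      (∫ t, t * scaledBetaWeight (b / 2 - 1) ((p : ℝ) / 2 - b / 2 - 1)
          (fun t => (1 + t) ^ (-(k : ℝ) / 2 - a - b / 2 - 2)) w t) /
        ∫ t, scaledBetaWeight (b / 2 - 1) ((p : ℝ) / 2 - b / 2 - 1)
          (fun t => (1 + t) ^ (-(k : ℝ) / 2 - a - b / 2 - 2)) w t := by
  rw [id_mul_scaledBetaWeight, integral_scaledBetaWeight hw, integral_scaledBetaWeight hw,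
    mul_div_mul_left _ _ (rpow_pos_of_pos hw _).ne', rshrink, ← integral_const_mul]
  congr 1
  refine setIntegral_congr_fun measurableSet_Ioo fun l hl => ?_
  have hpow : l ^ (b / 2) = l ^ (b / 2 - 1) * l := by
    rw [← rpow_add_one hl.1.ne', sub_add_cancel]
  simp only [hpow]
  ring

theorem rshrink_monotone_general (p k : ℕ) (a b : ℝ)
    (hb0 : 0 < b) (hbp : b ≤ (p : ℝ) - 2) :
    MonotoneOn (rshrink p k a b) (Set.Ioi (0 : ℝ)) := by
  have he : -1 < b / 2 - 1 := by linarith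
  have hc : 0 ≤ (p : ℝ) / 2 - b / 2 - 1 := by linarith
  set h : ℝ → ℝ := fun t => (1 + t) ^ (-(k : ℝ) / 2 - a - b / 2 - 2)
  have hpos : ∀ w, ∀ t ∈ Ioo 0 w, 0 < h t := fun _ t ht => rpow_pos_of_pos (by linarith [ht.1]) _
  have hcont : ∀ w, ContinuousOn h (Icc 0 w) := fun w =>
    (continuousOn_const.add continuousOn_id).rpow_const fun t ht =>
      Or.inl (by linarith [ht.1] : 1 + t ≠ 0)
  have hmean : ∀ w,
      Integrable fun t => t * scaledBetaWeight (b / 2 - 1) ((p : ℝ) / 2 - b / 2 - 1) h w t :=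
    fun w => id_mul_scaledBetaWeight ▸
      integrable_scaledBetaWeight he hc (continuousOn_id.mul (hcont w))
  intro w₁ hw₁ w₂ hw₂ hw
  rw [rshrink_eq_div hw₁, rshrink_eq_div hw₂,
    div_le_div_iff₀ (integral_scaledBetaWeight_pos he hc (hcont _) (hpos _) hw₁)
      (integral_scaledBetaWeight_pos he hc (hcont _) (hpos _) hw₂)]
  exact integral_id_mul_mul_integral_le_of_cross_le
    (integrable_scaledBetaWeight he hc (hcont _)) (integrable_scaledBetaWeight he hc (hcont _))
    (hmean w₁) (hmean w₂)
    fun t u htu => scaledBetaWeight_cross_le hc (fun t ht => (hpos _ t ht).le) hw htu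

/-- **Lemma 6.3, part 1**: for `0 < b ≤ p - 2` and `k/2 + a + 1 > 0`, the shrinkage factor
`r` is nondecreasing on `(0,∞)`. -/
theorem rshrink_monotone (p k : ℕ) (hp : 3 ≤ p) (hk : 1 ≤ k) (a b : ℝ)
    (hb0 : 0 < b) (hbp : b ≤ (p : ℝ) - 2) (ha : (k : ℝ) / 2 + a + 1 > 0) :
    MonotoneOn (rshrink p k a b) (Set.Ioi (0 : ℝ)) :=
  rshrink_monotone_general p k a b hb0 hbp
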